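/- Let Λ be a compact invariant set of a flow with a hyperbolic singularity σ such that every point of Λ belongs to W^s(σ) ∩ W^u(σ). If Λ contains two points p, q (distinct from σ) with disjoint orbits, then Λ is not topologically transitive. -/

import Mathlib

open Filter Set Metric TensorProduct

section Defs
variable {M : Type*}

/-- A continuous flow on a topological space. -/
def IsFlow [TopologicalSpace M] (φ : ℝ → M → M) : Prop :=
  Continuous (fun p : ℝ × M => φ p.1 p.2) ∧ (∀ x, φ 0 x = x) ∧
    ∀ s t x, φ (s + t) x = φ s (φ t x)

def InvariantSet (φ : ℝ → M → M) (Λ : Set M) : Prop :=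
  ∀ t : ℝ, ∀ x ∈ Λ, φ t x ∈ Λ

def orbitOf (φ : ℝ → M → M) (p : M) : Set M := Set.range fun t : ℝ => φ t p

/-- A critical point: singularity or periodic point. -/
def IsCriticalPt (φ : ℝ → M → M) (p : M) : Prop := ∃ T : ℝ, 0 < T ∧ φ T p = p

/-- `K` is a spacing constant for `ε`: any `K`-spaced weak specification
(two orbit segments of points of `Λ`, parametrized over `[a₁,b₁]` and `[a₂,b₂]`
with `a₂ ≥ b₁ + K`) is `ε`-shadowed by a point of `Λ`. -/
def SpecConst [MetricSpace M] (φ : ℝ → M → M) (Λ : Set M) (ε K : ℝ) : Prop :=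
  ∀ a₁ b₁ a₂ b₂ : ℝ, a₁ ≤ b₁ → a₂ ≤ b₂ → b₁ + K ≤ a₂ →
    ∀ x ∈ Λ, ∀ y ∈ Λ, ∃ z ∈ Λ,
      (∀ t ∈ Set.Icc a₁ b₁, dist (φ t z) (φ (t - a₁) x) < ε) ∧
      (∀ t ∈ Set.Icc a₂ b₂, dist (φ t z) (φ (t - a₂) y) < ε)

/-- The weak specification property on `Λ`. -/
def WeakSpec [MetricSpace M] (φ : ℝ → M → M) (Λ : Set M) : Prop :=
  ∀ ε : ℝ, 0 < ε → ∃ K : ℝ, 0 < K ∧ SpecConst φ Λ ε K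

/-- Topological mixing of the flow restricted to `Λ`. -/
def TopMixingOn [TopologicalSpace M] (φ : ℝ → M → M) (Λ : Set M) : Prop :=
  ∀ U V : Set M, IsOpen U → IsOpen V → (U ∩ Λ).Nonempty → (V ∩ Λ).Nonempty →
    ∃ N : ℝ, 0 < N ∧ ∀ t : ℝ, N ≤ t → (φ t '' (V ∩ Λ) ∩ (U ∩ Λ)).Nonempty

/-- Topological transitivity of the flow restricted to `Λ`. -/
def TopTransOn [TopologicalSpace M] (φ : ℝ → M → M) (Λ : Set M) : Prop :=
  ∀ U V : Set M, IsOpen U → IsOpen V → (U ∩ Λ).Nonempty → (V ∩ Λ).Nonempty →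
    ∃ t : ℝ, 0 < t ∧ (φ t '' (V ∩ Λ) ∩ (U ∩ Λ)).Nonempty

/-- The stable set `W^s(σ)` of a point (e.g. a singularity). -/
def WsPoint [TopologicalSpace M] (φ : ℝ → M → M) (σ : M) : Set M :=
  {y | Filter.Tendsto (fun t : ℝ => φ t y) Filter.atTop (nhds σ)}

/-- The unstable set `W^u(σ)` of a point (e.g. a singularity). -/
def WuPoint [TopologicalSpace M] (φ : ℝ → M → M) (σ : M) : Set M :=
  {y | Filter.Tendsto (fun t : ℝ => φ t y) Filter.atBot (nhds σ)}

/-- The strong stable set `W^{ss}(p)`. -/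
def Wss [MetricSpace M] (φ : ℝ → M → M) (p : M) : Set M :=
  {y | Filter.Tendsto (fun t : ℝ => dist (φ t y) (φ t p)) Filter.atTop (nhds 0)}

/-- The strong unstable set `W^{uu}(p)`. -/
def Wuu [MetricSpace M] (φ : ℝ → M → M) (p : M) : Set M :=
  {y | Filter.Tendsto (fun t : ℝ => dist (φ t y) (φ t p)) Filter.atBot (nhds 0)}

/-- The stable set of the orbit of `p`: `W^s(O(p)) = ⋃_t W^{ss}(X_t(p))`. -/
def WsOrb [MetricSpace M] (φ : ℝ → M → M) (p : M) : Set M := ⋃ s : ℝ, Wss φ (φ s p)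

/-- The unstable set of the orbit of `p`. -/
def WuOrb [MetricSpace M] (φ : ℝ → M → M) (p : M) : Set M := ⋃ s : ℝ, Wuu φ (φ s p)

end Defs

section VF
variable {E : Type*} [NormedAddCommGroup E] [NormedSpace ℝ E]

/-- `φ` is the flow generated by the vector field `X`. -/
def GeneratedBy (X : E → E) (φ : ℝ → E → E) : Prop :=
  (∀ x, φ 0 x = x) ∧ (∀ s t x, φ (s + t) x = φ s (φ t x)) ∧
    ∀ x t, HasDerivAt (fun s => φ s x) (X (φ t x)) t

/-- The complexification of a continuous real-linear endomorphism. -/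
noncomputable def cxEnd (A : E →L[ℝ] E) : Module.End ℂ (ℂ ⊗[ℝ] E) :=
  (A : E →ₗ[ℝ] E).baseChange ℂ

/-- A hyperbolic singularity: `X σ = 0` and no eigenvalue of `DX(σ)` has zero real part. -/
def HypSing (X : E → E) (σ : E) : Prop :=
  X σ = 0 ∧ ∀ μ ∈ spectrum ℂ (cxEnd (fderiv ℝ X σ)), μ.re ≠ 0

/-- A hyperbolic periodic point: a regular point of period `T > 0` such that no
characteristic multiplier (eigenvalue of `Dφ_T(p)` other than the simple eigenvalue `1`
coming from the flow direction) lies on the unit circle. -/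
def HypPeriodic (X : E → E) (φ : ℝ → E → E) (p : E) : Prop :=
  X p ≠ 0 ∧ ∃ T : ℝ, 0 < T ∧ φ T p = p ∧
    (∀ μ ∈ spectrum ℂ (cxEnd (fderiv ℝ (φ T) p)), μ = 1 ∨ ‖μ‖ ≠ 1) ∧
    Module.finrank ℂ (Module.End.maxGenEigenspace (cxEnd (fderiv ℝ (φ T) p)) 1) = 1

/-- A hyperbolic critical element: hyperbolic singularity or hyperbolic periodic point. -/
def HypCritical (X : E → E) (φ : ℝ → E → E) (p : E) : Prop :=
  HypSing X p ∨ HypPeriodic X φ p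

/-- A hyperbolic periodic orbit of saddle type: it has characteristic multipliers both
inside and outside the unit circle. -/
def IsSaddlePeriodic (X : E → E) (φ : ℝ → E → E) (p : E) : Prop :=
  X p ≠ 0 ∧ ∃ T : ℝ, 0 < T ∧ φ T p = p ∧
    (∃ μ ∈ spectrum ℂ (cxEnd (fderiv ℝ (φ T) p)), ‖μ‖ < 1) ∧
    (∃ μ ∈ spectrum ℂ (cxEnd (fderiv ℝ (φ T) p)), 1 < ‖μ‖)

/-- `Crit(X)`: singularities together with periodic points. -/
def CritSet (X : E → E) (φ : ℝ → E → E) : Set E :=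
  {x | X x = 0 ∨ ∃ T : ℝ, 0 < T ∧ φ T x = x}

/-- `PO(X)`: the (regular) periodic points. -/
def PerPts (X : E → E) (φ : ℝ → E → E) : Set E :=
  {x | X x ≠ 0 ∧ ∃ T : ℝ, 0 < T ∧ φ T x = x}

end VF

/-! If the flow on `Λ` were transitive, the Baire category theorem would give a point `z ∈ Λ`
whose orbit is dense in `Λ`. As `X_t(z) → σ` for `t → ±∞`, the orbit of `z` with `σ` added is
compact, hence closed, so it contains all of `Λ`: every point of `Λ` other than `σ`, in
particular both `p` and `q`, lies on the orbit of `z`. -/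

open Topology

section Flow

variable {M : Type*}

theorem closure_range_subset_insert_of_tendsto [TopologicalSpace M] [T2Space M] {f : ℝ → M}
    {σ : M} (hf : Continuous f) (h_top : Tendsto f atTop (𝓝 σ)) (h_bot : Tendsto f atBot (𝓝 σ)) :
    closure (range f) ⊆ insert σ (range f) := by
  have h_cocompact : Tendsto f (cocompact ℝ) (𝓝 σ) := by
    rw [cocompact_eq_atBot_atTop]
    exact h_bot.sup h_top
  exact closure_minimal (subset_insert _ _)
    (h_cocompact.isCompact_insert_range_of_cocompact hf).isClosed

theorem IsFlow.continuous_apply [TopologicalSpace M] {φ : ℝ → M → M} (hφ : IsFlow φ) (t : ℝ) :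
    Continuous (φ t) :=
  hφ.1.comp (continuous_const.prodMk continuous_id)

theorem IsFlow.continuous_orbit [TopologicalSpace M] {φ : ℝ → M → M} (hφ : IsFlow φ) (x : M) :
    Continuous fun t => φ t x :=
  hφ.1.comp (continuous_id.prodMk continuous_const)

theorem IsFlow.mem_orbitOf_self [TopologicalSpace M] {φ : ℝ → M → M} (hφ : IsFlow φ) (x : M) :
    x ∈ orbitOf φ x :=
  ⟨0, hφ.2.1 x⟩

theorem IsFlow.orbitOf_eq_of_mem [TopologicalSpace M] {φ : ℝ → M → M} (hφ : IsFlow φ)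
    {x y : M} (hy : y ∈ orbitOf φ x) : orbitOf φ y = orbitOf φ x := by
  obtain ⟨s, rfl⟩ := hy
  ext w
  constructor
  · rintro ⟨t, rfl⟩
    exact ⟨t + s, hφ.2.2 t s x⟩
  · rintro ⟨t, rfl⟩
    refine ⟨t - s, ?_⟩
    simp only [← hφ.2.2, sub_add_cancel]

theorem isOpen_setOf_exists_apply_mem [TopologicalSpace M] {φ : ℝ → M → M}
    (hφ : ∀ t, Continuous (φ t)) (Λ : Set M) {U : Set M} (hU : IsOpen U) :
    IsOpen {z : Λ | ∃ t, φ t z ∈ U} := by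
  have h_eq : {z : Λ | ∃ t, φ t z ∈ U} = ⋃ t, (φ t ∘ Subtype.val) ⁻¹' U := by
    ext
    simp
  rw [h_eq]
  exact isOpen_iUnion fun t => hU.preimage ((hφ t).comp continuous_subtype_val)

theorem TopTransOn.dense_setOf_exists_apply_mem [TopologicalSpace M] {φ : ℝ → M → M}
    {Λ : Set M} (h : TopTransOn φ Λ) {U : Set M} (hU : IsOpen U) (hUΛ : (U ∩ Λ).Nonempty) :
    Dense {z : Λ | ∃ t, φ t z ∈ U} := by
  rw [dense_iff_inter_open]
  rintro W hW ⟨w, hw⟩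
  obtain ⟨V, hV, rfl⟩ := isOpen_induced_iff.mp hW
  obtain ⟨t, -, _, ⟨x, ⟨hxV, hxΛ⟩, rfl⟩, hxU, -⟩ := h U V hU hV hUΛ ⟨w, hw, w.2⟩
  exact ⟨⟨x, hxΛ⟩, hxV, t, hxU⟩

/-- Baire: the points whose orbit meets a given ball around a point of a dense sequence of `Λ`
form an open dense subset of `Λ`. -/
theorem TopTransOn.exists_subset_closure_orbitOf [MetricSpace M] {φ : ℝ → M → M} {Λ : Set M}
    (h : TopTransOn φ Λ) (hφ : ∀ t, Continuous (φ t)) (hΛ : IsCompact Λ) (hne : Λ.Nonempty) :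
    ∃ z ∈ Λ, Λ ⊆ closure (orbitOf φ z) := by
  have : CompactSpace Λ := isCompact_iff_compactSpace.mp hΛ
  have : Nonempty Λ := hne.to_subtype
  set c := TopologicalSpace.denseSeq Λ
  let U : ℕ × ℕ → Set M := fun nm => ball (c nm.1 : M) (1 / (nm.2 + 1))
  have hU : ∀ nm, IsOpen (U nm) := fun _ => isOpen_ball
  have hUΛ : ∀ nm, (U nm ∩ Λ).Nonempty := fun nm =>
    ⟨c nm.1, mem_ball_self (by positivity), (c nm.1).2⟩
  obtain ⟨z, hz⟩ := (dense_iInter_of_isOpen (fun nm => isOpen_setOf_exists_apply_mem hφ Λ (hU nm))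
    (fun nm => h.dense_setOf_exists_apply_mem (hU nm) (hUΛ nm))).nonempty
  have hc : ∀ n, (c n : M) ∈ closure (orbitOf φ z) := by
    refine fun n => Metric.mem_closure_iff.mpr fun ε hε => ?_
    obtain ⟨m, hm⟩ := exists_nat_one_div_lt hε
    obtain ⟨t, ht⟩ := mem_iInter.mp hz (n, m)
    exact ⟨_, ⟨t, rfl⟩, (mem_ball'.mp ht).trans hm⟩
  refine ⟨z, z.2, fun x hx => ?_⟩
  have hx_closure : x ∈ closure (Subtype.val '' range c) :=
    image_closure_subset_closure_image continuous_subtype_val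
      ⟨⟨x, hx⟩, TopologicalSpace.denseRange_denseSeq Λ ⟨x, hx⟩, rfl⟩
  refine closure_minimal ?_ isClosed_closure hx_closure
  rintro _ ⟨_, ⟨n, rfl⟩, rfl⟩
  exact hc n

end Flow

theorem not_transitive_of_two_homoclinic_orbits_general
    {E : Type*} [NormedAddCommGroup E]
    (φ : ℝ → E → E)
    (hflow : IsFlow φ)
    (Λ : Set E) (hΛc : IsCompact Λ)
    (σ : E)
    (hall : ∀ x ∈ Λ, x ∈ WsPoint φ σ ∩ WuPoint φ σ)
    (p q : E) (hpΛ : p ∈ Λ) (hqΛ : q ∈ Λ) (hpσ : p ≠ σ) (hqσ : q ≠ σ)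
    (hdisj : orbitOf φ p ∩ orbitOf φ q = ∅) :
    ¬ TopTransOn φ Λ := by
  intro htrans
  obtain ⟨z, hzΛ, hz_dense⟩ :=
    htrans.exists_subset_closure_orbitOf hflow.continuous_apply hΛc ⟨p, hpΛ⟩
  have h_orbit : ∀ x ∈ Λ, x ≠ σ → orbitOf φ x = orbitOf φ z := fun x hx hxσ =>
    hflow.orbitOf_eq_of_mem <|
      (closure_range_subset_insert_of_tendsto (hflow.continuous_orbit z) (hall z hzΛ).1
        (hall z hzΛ).2 (hz_dense hx)).resolve_left hxσ
  rw [h_orbit p hpΛ hpσ, h_orbit q hqΛ hqσ, inter_self] at hdisj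
  exact hdisj.subset (hflow.mem_orbitOf_self z)

/-- If a compact invariant set `Λ` has a hyperbolic singularity `σ` with
`Λ ⊆ W^s(σ) ∩ W^u(σ)` and contains two points `p, q ≠ σ` with disjoint orbits, then the
flow on `Λ` is not topologically transitive. -/
theorem not_transitive_of_two_homoclinic_orbits
    {E : Type*} [NormedAddCommGroup E] [NormedSpace ℝ E] [FiniteDimensional ℝ E]
    (X : E → E) (φ : ℝ → E → E) (hX : ContDiff ℝ 1 X)
    (hflow : IsFlow φ) (hgen : GeneratedBy X φ)
    (Λ : Set E) (hΛc : IsCompact Λ) (hΛi : InvariantSet φ Λ)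
    (σ : E) (hσΛ : σ ∈ Λ) (hσ : HypSing X σ)
    (hall : ∀ x ∈ Λ, x ∈ WsPoint φ σ ∩ WuPoint φ σ)
    (p q : E) (hpΛ : p ∈ Λ) (hqΛ : q ∈ Λ) (hpσ : p ≠ σ) (hqσ : q ≠ σ)
    (hdisj : orbitOf φ p ∩ orbitOf φ q = ∅) :
    ¬ TopTransOn φ Λ :=
  not_transitive_of_two_homoclinic_orbits_general φ hflow Λ hΛc σ hall p q hpΛ hqΛ hpσ hqσ hdisj
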